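/- arXiv:1109.4673 — 3 statements merged into one kernel-verified Lean document; each statement's English description precedes it below -/
import Mathlib

section
/- If G is a noncomplete connected graph and H is a connected spanning subgraph of G, then T(H) ≤ T(G). -/
open SimpleGraph

/-- Number of connected components `ω(G)`. -/
noncomputable def SimpleGraph.omegaComp {W : Type*} (G : SimpleGraph W) : ℕ :=
  Nat.card G.ConnectedComponent

/-- Order `τ(G)` of a largest connected component of `G`. -/
noncomputable def SimpleGraph.tauMax {W : Type*} (G : SimpleGraph W) : ℕ :=
  sSup (Set.range fun c : G.ConnectedComponent =>
    Nat.card {v : W // G.connectedComponentMk v = c})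

/-- The graph `G - X` obtained by deleting the vertices of `X`. -/
def SimpleGraph.delVerts {V : Type*} (G : SimpleGraph V) (X : Finset V) :
    SimpleGraph {v : V // v ∉ X} :=
  SimpleGraph.comap Subtype.val G

/-- `X` is a vertex cut of `G`: deleting `X` leaves more than one component. -/
def SimpleGraph.IsVertexCut {V : Type*} (G : SimpleGraph V) (X : Finset V) : Prop :=
  1 < (G.delVerts X).omegaComp

/-- The tenacity `T(G) = min over vertex cuts X of (|X| + τ(G−X)) / ω(G−X)`. -/
noncomputable def SimpleGraph.tenacity {V : Type*} [Fintype V] (G : SimpleGraph V) : ℝ :=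
  sInf { t : ℝ | ∃ X : Finset V, G.IsVertexCut X ∧
    t = ((X.card : ℝ) + (G.delVerts X).tauMax) / (G.delVerts X).omegaComp }

/-- Vertex degree via `Nat.card` (no decidability assumptions needed). -/
noncomputable def SimpleGraph.deg {V : Type*} (G : SimpleGraph V) (v : V) : ℕ :=
  Nat.card (G.neighborSet v)

/-- A unicyclic graph: connected with as many edges as vertices. -/
def SimpleGraph.Unicyclic {V : Type*} [Fintype V] (G : SimpleGraph V) : Prop :=
  G.Connected ∧ Nat.card G.edgeSet = Fintype.card V

/-!
Deleting edges can only split components, so for every vertex set `X` the graph `H - X` has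
at least as many components as `G - X`, each of them no larger than a component of `G - X`.
Hence every vertex cut of `G` is one of `H`, with a ratio `(|X| + τ) / ω` no larger in `H`;
and since `G` is not complete it has a vertex cut, so the infimum defining `T(G)` is not the
junk value `sInf ∅ = 0`.
-/

namespace SimpleGraph

section Monotonicity

variable {W : Type*} [Finite W] {H G : SimpleGraph W}

theorem omegaComp_anti (h : H ≤ G) : G.omegaComp ≤ H.omegaComp :=
  ConnectedComponent.card_le_card_of_le h

theorem card_component_le_tauMax (G : SimpleGraph W) (c : G.ConnectedComponent) :
    Nat.card {v : W // G.connectedComponentMk v = c} ≤ G.tauMax :=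
  le_csSup (Set.finite_range _).bddAbove ⟨c, rfl⟩

theorem tauMax_mono (h : H ≤ G) : H.tauMax ≤ G.tauMax := by
  refine csSup_le' ?_
  rintro _ ⟨c, rfl⟩
  have hsub : ∀ v, H.connectedComponentMk v = c →
      G.connectedComponentMk v = c.map (Hom.ofLE h) := by
    rintro v rfl
    rfl
  exact (Nat.card_le_card_of_injective _ (Subtype.map_injective hsub Function.injective_id)).trans
    (G.card_component_le_tauMax _)

end Monotonicity

theorem delVerts_mono {V : Type*} {H G : SimpleGraph V} (h : H ≤ G) (X : Finset V) :
    H.delVerts X ≤ G.delVerts X :=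
  fun _ _ hadj => h hadj

theorem IsVertexCut.mono {V : Type*} [Finite V] {H G : SimpleGraph V} {X : Finset V}
    (h : H ≤ G) (hX : G.IsVertexCut X) : H.IsVertexCut X :=
  hX.trans_le (omegaComp_anti (delVerts_mono h X))

theorem isVertexCut_compl_pair {V : Type*} [Fintype V] [DecidableEq V] {G : SimpleGraph V}
    {u v : V} (huv : u ≠ v) (hnadj : ¬ G.Adj u v) : G.IsVertexCut {u, v}ᶜ := by
  have hmem : ∀ w, w ∉ ({u, v}ᶜ : Finset V) ↔ w = u ∨ w = v := by simp [or_iff_not_imp_left]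
  have hbot : G.delVerts {u, v}ᶜ = ⊥ := by
    ext ⟨a, ha⟩ ⟨b, hb⟩
    simp only [bot_adj, iff_false]
    intro hab
    change G.Adj a b at hab
    rcases (hmem a).1 ha with rfl | rfl <;> rcases (hmem b).1 hb with rfl | rfl
    exacts [hab.ne rfl, hnadj hab, hnadj hab.symm, hab.ne rfl]
  have hsep : (G.delVerts {u, v}ᶜ).connectedComponentMk ⟨u, (hmem u).2 (.inl rfl)⟩ ≠
      (G.delVerts {u, v}ᶜ).connectedComponentMk ⟨v, (hmem v).2 (.inr rfl)⟩ := by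
    rw [Ne, ConnectedComponent.eq, hbot, reachable_bot]
    exact fun heq => huv (congrArg Subtype.val heq)
  rw [IsVertexCut, omegaComp, Finite.one_lt_card_iff_nontrivial]
  exact ⟨_, _, hsep⟩

theorem exists_isVertexCut_of_ne_top {V : Type*} [Fintype V] {G : SimpleGraph V} (h : G ≠ ⊤) :
    ∃ X : Finset V, G.IsVertexCut X := by
  classical
  obtain ⟨u, v, huv, hnadj⟩ : ∃ u v : V, u ≠ v ∧ ¬ G.Adj u v := by
    by_contra! hall
    exact h (eq_top_iff.2 fun a b hab => hall a b hab)
  exact ⟨_, isVertexCut_compl_pair huv hnadj⟩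

noncomputable def cutRatio {V : Type*} (G : SimpleGraph V) (X : Finset V) : ℝ :=
  ((X.card : ℝ) + (G.delVerts X).tauMax) / (G.delVerts X).omegaComp

theorem cutRatio_mono {V : Type*} [Finite V] {H G : SimpleGraph V} {X : Finset V}
    (h : H ≤ G) (hX : G.IsVertexCut X) : H.cutRatio X ≤ G.cutRatio X := by
  have hω := omegaComp_anti (delVerts_mono h X)
  have hτ := tauMax_mono (delVerts_mono h X)
  unfold cutRatio
  gcongr
  exact_mod_cast Nat.one_pos.trans hX

section Tenacity

variable {V : Type*} [Fintype V] {G : SimpleGraph V}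

theorem tenacity_le_cutRatio {X : Finset V} (hX : G.IsVertexCut X) :
    G.tenacity ≤ G.cutRatio X :=
  csInf_le ⟨0, by rintro _ ⟨Y, -, rfl⟩; positivity⟩ ⟨X, hX, rfl⟩

theorem le_tenacity {t : ℝ} (hcut : ∃ X, G.IsVertexCut X)
    (ht : ∀ X, G.IsVertexCut X → t ≤ G.cutRatio X) : t ≤ G.tenacity := by
  obtain ⟨X, hX⟩ := hcut
  refine le_csInf ⟨_, X, hX, rfl⟩ ?_
  rintro _ ⟨Y, hY, rfl⟩
  exact ht Y hY

end Tenacity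

end SimpleGraph

theorem tenacity_mono_spanning_subgraph_general {V : Type*} [Fintype V]
    (G H : SimpleGraph V) (hGnc : G ≠ ⊤)
    (hle : H ≤ G) :
    H.tenacity ≤ G.tenacity :=
  le_tenacity (exists_isVertexCut_of_ne_top hGnc) fun _ hX =>
    (tenacity_le_cutRatio (hX.mono hle)).trans (cutRatio_mono hle hX)

theorem tenacity_mono_spanning_subgraph {V : Type*} [Fintype V]
    (G H : SimpleGraph V) (hGc : G.Connected) (hGnc : G ≠ ⊤)
    (hHc : H.Connected) (hle : H ≤ G) :
    H.tenacity ≤ G.tenacity :=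
  tenacity_mono_spanning_subgraph_general G H hGnc hle
end

section
/- Let G be a connected graph. If there exists a vertex cut X₀ of G such that G−X₀ is a forest and ω(G−X₀) ≥ |X₀| + 3, then T(G) < 1. -/
open SimpleGraph

/-!
Delete from `F = G - X₀` a vertex of degree at least two, and repeat until none is left: this
yields a cut `X` such that `G - X` has maximum degree at most one, so `τ(G - X) ≤ 2`, and each
deleted vertex destroys at least two edges. Since `ω ≥ |V| - |E|` for every finite graph, with
equality for forests, this edge count gives `ω(G - X) ≥ ω(F) + |X| - |X₀| ≥ |X| + 3`, hence
`T(G) ≤ (|X| + 2) / (|X| + 3) < 1`.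
-/

theorem Finset.natCard_subtype_notMem_add_card {V : Type*} [Finite V] (X : Finset V) :
    Nat.card {v // v ∉ X} + X.card = Nat.card V := by
  classical
  have := Fintype.ofFinite V
  rw [Nat.card_eq_fintype_card, Fintype.card_subtype_compl, Fintype.card_coe,
    Nat.card_eq_fintype_card]
  have := X.card_le_univ
  omega

namespace SimpleGraph

variable {V : Type*} {G : SimpleGraph V}

theorem Reachable.deleteEdges_reachable_or {a b u v : V} (h : G.Reachable u v) :
    (G.deleteEdges {s(a, b)}).Reachable u v ∨ (G.deleteEdges {s(a, b)}).Reachable u a ∨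
      (G.deleteEdges {s(a, b)}).Reachable u b := by
  obtain ⟨p⟩ := h
  induction p with
  | nil => exact Or.inl .rfl
  | @cons u x v hux p ih =>
    by_cases he : s(u, x) = s(a, b)
    · rcases Sym2.eq_iff.mp he with ⟨rfl, -⟩ | ⟨rfl, -⟩
      · exact Or.inr (Or.inl .rfl)
      · exact Or.inr (Or.inr .rfl)
    · have hux' : (G.deleteEdges {s(a, b)}).Adj u x := by simpa [he] using hux
      exact ih.imp hux'.reachable.trans (Or.imp hux'.reachable.trans hux'.reachable.trans)

theorem card_connectedComponent_deleteEdges_le [Finite V] (G : SimpleGraph V) (a b : V) :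
    Nat.card (G.deleteEdges {s(a, b)}).ConnectedComponent ≤
      Nat.card G.ConnectedComponent + 1 := by
  classical
  set G' := G.deleteEdges {s(a, b)}
  let F : G'.ConnectedComponent → Option G.ConnectedComponent := fun c =>
    if c = G'.connectedComponentMk a then none else some (c.map (.ofLE (deleteEdges_le _)))
  -- off the `G'`-component of `a`, vertices joined in `G` are joined in `G'` through `b`
  have hF : F.Injective := by
    intro c d hcd
    induction c using ConnectedComponent.ind with | _ u
    induction d using ConnectedComponent.ind with | _ v
    simp only [F] at hcd
    split_ifs at hcd with hu hv hv
    · exact hu.trans hv.symm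
    rw [Option.some.injEq, ConnectedComponent.map_mk, ConnectedComponent.map_mk,
      ConnectedComponent.eq] at hcd
    rw [ConnectedComponent.eq] at hu hv ⊢
    rcases hcd.deleteEdges_reachable_or (a := a) (b := b) with huv | hua | hub
    · exact huv
    · exact absurd hua hu
    rcases hcd.symm.deleteEdges_reachable_or (a := a) (b := b) with hvu | hva | hvb
    · exact hvu.symm
    · exact absurd hva hv
    · exact hub.trans hvb.symm
  simpa using Nat.card_le_card_of_injective F hF

theorem card_connectedComponent_lt_deleteEdges_of_isBridge [Finite V] {a b : V}
    (hab : G.Adj a b) (hbr : G.IsBridge s(a, b)) :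
    Nat.card G.ConnectedComponent < Nat.card (G.deleteEdges {s(a, b)}).ConnectedComponent := by
  have := Fintype.ofFinite G.ConnectedComponent
  have := Fintype.ofFinite (G.deleteEdges {s(a, b)}).ConnectedComponent
  simp only [Nat.card_eq_fintype_card]
  refine Fintype.card_lt_of_surjective_not_injective
    (ConnectedComponent.map (.ofLE (deleteEdges_le _))) (ConnectedComponent.surjective_map_ofLE _)
    fun hinj => hbr (ConnectedComponent.eq.mp (hinj ?_))
  simpa using hab.reachable

theorem card_edgeSet_deleteEdges_add_one [Finite V] {e : Sym2 V} (he : e ∈ G.edgeSet) :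
    Nat.card (G.deleteEdges {e}).edgeSet + 1 = Nat.card G.edgeSet := by
  rw [Nat.card_coe_set_eq, Nat.card_coe_set_eq, edgeSet_deleteEdges]
  exact Set.ncard_sdiff_singleton_add_one he (Set.toFinite _)

theorem card_le_card_connectedComponent_add_card_edgeSet [Finite V] (G : SimpleGraph V) :
    Nat.card V ≤ Nat.card G.ConnectedComponent + Nat.card G.edgeSet := by
  induction h : Nat.card G.edgeSet generalizing G with
  | zero =>
    have hG : G = ⊥ := by
      rw [← edgeSet_eq_empty, ← Set.ncard_eq_zero, ← Nat.card_coe_set_eq, h]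
    subst hG
    refine Nat.card_le_card_of_injective (⊥ : SimpleGraph V).connectedComponentMk
      fun u v huv => ?_
    exact reachable_bot.mp (ConnectedComponent.eq.mp huv)
  | succ n ih =>
    obtain ⟨⟨e, he⟩⟩ := (Nat.card_pos_iff (α := G.edgeSet)).mp (by omega) |>.1
    induction e using Sym2.ind with | _ a b
    have := card_edgeSet_deleteEdges_add_one he
    have := ih (G.deleteEdges {s(a, b)}) (by omega)
    have := card_connectedComponent_deleteEdges_le G a b
    omega

theorem IsAcyclic.card_edgeSet_add_card_connectedComponent_le [Finite V] (hG : G.IsAcyclic) :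
    Nat.card G.edgeSet + Nat.card G.ConnectedComponent ≤ Nat.card V := by
  induction h : Nat.card G.edgeSet generalizing G with
  | zero =>
    simpa using Nat.card_le_card_of_surjective G.connectedComponentMk fun c => c.exists_rep
  | succ n ih =>
    obtain ⟨⟨e, he⟩⟩ := (Nat.card_pos_iff (α := G.edgeSet)).mp (by omega) |>.1
    induction e using Sym2.ind with | _ a b
    have := card_edgeSet_deleteEdges_add_one he
    have := ih (hG.anti (deleteEdges_le {s(a, b)})) (by omega)
    have := card_connectedComponent_lt_deleteEdges_of_isBridge (a := a) (b := b) he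
      (isAcyclic_iff_forall_isBridge.mp hG he)
    omega

theorem Reachable.eq_or_adj_of_subsingleton_neighborSet
    (hG : ∀ v, (G.neighborSet v).Subsingleton) {u v : V} (h : G.Reachable u v) :
    u = v ∨ G.Adj u v := by
  obtain ⟨p⟩ := h
  induction p with
  | nil => exact Or.inl rfl
  | @cons u x v hux p ih =>
    rcases ih with rfl | hxv
    · exact Or.inr hux
    · exact Or.inl (hG x hux.symm hxv)

theorem tauMax_le_two_of_subsingleton_neighborSet (hG : ∀ v, (G.neighborSet v).Subsingleton) :
    G.tauMax ≤ 2 := by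
  refine csSup_le' ?_
  rintro _ ⟨c, rfl⟩
  induction c using ConnectedComponent.ind with | _ u
  have hsub : {v | G.connectedComponentMk v = G.connectedComponentMk u} ⊆
      insert u (G.neighborSet u) := fun v hv =>
    (Reachable.eq_or_adj_of_subsingleton_neighborSet hG (ConnectedComponent.eq.mp hv).symm).imp
      Eq.symm id
  calc Nat.card {v // G.connectedComponentMk v = G.connectedComponentMk u}
      ≤ (insert u (G.neighborSet u)).ncard :=
        Set.ncard_le_ncard hsub ((hG u).finite.insert u)
    _ ≤ (G.neighborSet u).ncard + 1 := Set.ncard_insert_le _ _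
    _ ≤ 2 := by have := (Set.ncard_le_one (hG u).finite).mpr fun a ha b hb => hG u ha hb; omega

theorem card_edgeSet_delVerts_insert_add_card_neighborSet_le [Finite V] [DecidableEq V]
    (G : SimpleGraph V) (X : Finset V) (w : {v // v ∉ X}) :
    Nat.card (G.delVerts (insert w.1 X)).edgeSet + Nat.card ((G.delVerts X).neighborSet w) ≤
      Nat.card (G.delVerts X).edgeSet := by
  set H := G.delVerts X
  let ι : G.delVerts (insert w.1 X) ↪g H :=
    { toFun := fun u => ⟨u.1, fun hu => u.2 (Finset.mem_insert_of_mem hu)⟩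
      inj' := fun u u' h => Subtype.ext (Subtype.mk.inj h)
      map_rel_iff' := Iff.rfl }
  have hmaps : ∀ e, (ι.mapEdgeSet e : Sym2 _) ∈ H.edgeSet \ H.incidenceSet w := by
    rintro ⟨e, he⟩
    refine ⟨(ι.mapEdgeSet ⟨e, he⟩).2, fun hw => ?_⟩
    induction e using Sym2.ind with | _ a b
    rcases Sym2.mem_iff.mp (show w ∈ s(ι a, ι b) from hw.2) with h | h
    · exact a.2 (Finset.mem_insert.mpr (Or.inl (congrArg Subtype.val h).symm))
    · exact b.2 (Finset.mem_insert.mpr (Or.inl (congrArg Subtype.val h).symm))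
  have hinc : Nat.card (H.neighborSet w) = (H.incidenceSet w).ncard := by
    rw [← Nat.card_coe_set_eq]
    exact Nat.card_congr (H.incidenceSetEquivNeighborSet w).symm
  calc Nat.card (G.delVerts (insert w.1 X)).edgeSet + Nat.card (H.neighborSet w)
      ≤ (H.edgeSet \ H.incidenceSet w).ncard + (H.incidenceSet w).ncard := by
        rw [hinc, ← Nat.card_coe_set_eq]
        gcongr
        exact Nat.card_le_card_of_injective (fun e => ⟨_, hmaps e⟩)
          fun e e' h => ι.mapEdgeSet.injective (Subtype.ext (Subtype.mk.inj h))
    _ = Nat.card H.edgeSet := by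
        rw [Nat.card_coe_set_eq]
        exact Set.ncard_sdiff_add_ncard_of_subset (H.incidenceSet_subset w)

theorem exists_delVerts_subsingleton_neighborSet [Finite V] (G : SimpleGraph V) (X : Finset V) :
    ∃ Y : Finset V, (∀ v, ((G.delVerts Y).neighborSet v).Subsingleton) ∧
      Nat.card (G.delVerts Y).edgeSet + 2 * Y.card ≤
        Nat.card (G.delVerts X).edgeSet + 2 * X.card := by
  classical
  induction h : Nat.card (G.delVerts X).edgeSet using Nat.strong_induction_on generalizing X
    with | _ n ih
  by_cases hdeg : ∀ v, ((G.delVerts X).neighborSet v).Subsingleton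
  · exact ⟨X, hdeg, h ▸ le_rfl⟩
  obtain ⟨w, hw⟩ := not_forall.mp hdeg
  have hw2 : 2 ≤ Nat.card ((G.delVerts X).neighborSet w) := by
    rw [Nat.card_coe_set_eq]
    exact Set.one_lt_ncard_iff_nontrivial.mpr (Set.not_subsingleton_iff.mp hw)
  have hstep := card_edgeSet_delVerts_insert_add_card_neighborSet_le G X w
  obtain ⟨Y, hY, hYcard⟩ := ih _ (by omega) (insert w.1 X) rfl
  rw [Finset.card_insert_of_notMem w.2] at hYcard
  exact ⟨Y, hY, by omega⟩

theorem tenacity_le_of_isVertexCut [Fintype V] {X : Finset V} (hX : G.IsVertexCut X) :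
    G.tenacity ≤ ((X.card : ℝ) + (G.delVerts X).tauMax) / (G.delVerts X).omegaComp :=
  csInf_le ⟨0, by rintro t ⟨X, -, rfl⟩; positivity⟩ ⟨X, hX, rfl⟩

end SimpleGraph

theorem tenacity_lt_one_of_forest_cut_general {V : Type*} [Fintype V]
    (G : SimpleGraph V) (X₀ : Finset V)
    (hforest : (G.delVerts X₀).IsAcyclic)
    (hω : X₀.card + 3 ≤ (G.delVerts X₀).omegaComp) :
    G.tenacity < 1 := by
  obtain ⟨X, hdeg, hedges⟩ := exists_delVerts_subsingleton_neighborSet G X₀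
  have hτ := tauMax_le_two_of_subsingleton_neighborSet hdeg
  have hX := card_le_card_connectedComponent_add_card_edgeSet (G.delVerts X)
  have hX₀ := hforest.card_edgeSet_add_card_connectedComponent_le
  have hV := X.natCard_subtype_notMem_add_card
  have hV₀ := X₀.natCard_subtype_notMem_add_card
  have hωX : X.card + 3 ≤ (G.delVerts X).omegaComp := by
    unfold omegaComp at hω ⊢
    omega
  refine (tenacity_le_of_isVertexCut (show 1 < (G.delVerts X).omegaComp by omega)).trans_lt ?_
  rw [div_lt_one (by exact_mod_cast (by omega : 0 < (G.delVerts X).omegaComp))]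
  exact_mod_cast (by omega : X.card + (G.delVerts X).tauMax < (G.delVerts X).omegaComp)

theorem tenacity_lt_one_of_forest_cut {V : Type*} [Fintype V]
    (G : SimpleGraph V) (hG : G.Connected) (X₀ : Finset V)
    (hcut : G.IsVertexCut X₀) (hforest : (G.delVerts X₀).IsAcyclic)
    (hω : X₀.card + 3 ≤ (G.delVerts X₀).omegaComp) :
    G.tenacity < 1 :=
  tenacity_lt_one_of_forest_cut_general G X₀ hforest hω
end

section
/- For integers n, m with n−1 ≤ m ≤ C(n,2)−1 and k the unique integer satisfying C(k,2) + (n−k)(k−1) < m ≤ C(k,2) + (n−k)k, there exists a connected graph with n vertices and m edges whose tenacity equals (k+1)/(n−k); namely, a graph consisting of a complete subgraph K_k together with n−k additional independent vertices joined by m − C(k,2) edges to vertices of K_k (with each additional vertex having at least one neighbor in K_k). -/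
open SimpleGraph

/-! Take the clique `K` on the vertices `i < k`, join its vertex `0` to the `t` outside vertices
`k ≤ i < k + t` and every other vertex of `K` to all vertices; this graph has
`C(k,2) + (n - k)(k - 1) + t` edges. A vertex cut `X` must contain `K \ {0}`. If `0 ∈ X`, then
`|X| ≥ k` and `G - X` has at most `n - |X| ≤ n - k` components. Otherwise the component of `0`
absorbs every remaining vertex below `k + t`, so `|X| + τ(G - X) ≥ k + t`, and only the at most
`n - k - t` vertices from `k + t` on can be isolated. In both cases `|X| + τ(G - X) ≥ k + 1` and
`ω(G - X) ≤ n - k`, with equality for `X = K`, whose deletion leaves `n - k` isolated vertices. -/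

open Finset

lemma Fin.card_filter_val {n : ℕ} (p : ℕ → Prop) [DecidablePred p] :
    #{i : Fin n | p i} = #{j ∈ range n | p j} := by
  rw [← card_map Fin.valEmbedding, map_filter', Fin.map_valEmbedding_univ, Nat.Iio_eq_range]
  congr 1
  ext j
  simp +contextual [Fin.exists_iff]

lemma Finset.natCard_subtype_notMem {V : Type*} [Fintype V] (X : Finset V) :
    Nat.card {v // v ∉ X} = Fintype.card V - X.card := by
  classical
  rw [Nat.card_eq_fintype_card, Fintype.card_subtype_compl, Fintype.card_coe]

namespace SimpleGraph

variable {W : Type*} (G : SimpleGraph W)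

lemma connected_of_forall_adj (w₀ : W) (h : ∀ v, v ≠ w₀ → G.Adj w₀ v) :
    G.Connected := by
  refine (connected_iff_exists_forall_reachable G).mpr ⟨w₀, fun v => ?_⟩
  by_cases hv : v = w₀
  · exact hv ▸ Reachable.refl (G := G) w₀
  · exact (h v hv).reachable

lemma Connected.omegaComp_eq_one {G : SimpleGraph W} (hG : G.Connected) : G.omegaComp = 1 := by
  have := hG.nonempty
  exact Nat.card_eq_one_iff_unique.mpr
    ⟨hG.preconnected.subsingleton_connectedComponent, inferInstance⟩

lemma omegaComp_le_card [Finite W] : G.omegaComp ≤ Nat.card W :=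
  Nat.card_le_card_of_surjective G.connectedComponentMk fun c => c.exists_rep

lemma omegaComp_le_card_add_one [Finite W] (I : Set W) (w₀ : W)
    (h : ∀ v ∉ I, G.Reachable v w₀) : G.omegaComp ≤ Nat.card I + 1 := by
  have hsurj : Function.Surjective
      fun i : Option I => G.connectedComponentMk (i.elim w₀ Subtype.val) := by
    refine ConnectedComponent.ind fun v => ?_
    by_cases hv : v ∈ I
    · exact ⟨some ⟨v, hv⟩, rfl⟩
    · exact ⟨none, ConnectedComponent.sound (h v hv).symm⟩
  calc G.omegaComp ≤ Nat.card (Option I) := Nat.card_le_card_of_surjective _ hsurj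
    _ = Nat.card I + 1 := Finite.card_option

lemma card_le_tauMax [Finite W] (S : Set W) (w₀ : W) (h : ∀ v ∈ S, G.Reachable v w₀) :
    Nat.card S ≤ G.tauMax := by
  have hbdd : BddAbove (Set.range fun c : G.ConnectedComponent =>
      Nat.card {v // G.connectedComponentMk v = c}) :=
    ⟨Nat.card W, by rintro _ ⟨c, rfl⟩; exact Finite.card_subtype_le _⟩
  refine le_trans ?_ (le_csSup hbdd ⟨G.connectedComponentMk w₀, rfl⟩)
  exact Nat.card_le_card_of_injective (fun v => ⟨v.1, ConnectedComponent.sound (h v.1 v.2)⟩)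
    fun a b hab => Subtype.ext (Subtype.mk_eq_mk.mp hab)

lemma one_le_tauMax [Finite W] [Nonempty W] : 1 ≤ G.tauMax := by
  obtain ⟨w⟩ := ‹Nonempty W›
  simpa using G.card_le_tauMax {w} w fun v hv => hv ▸ Reachable.refl (G := G) w

lemma omegaComp_bot [Finite W] : (⊥ : SimpleGraph W).omegaComp = Nat.card W :=
  (Nat.card_eq_of_bijective _ ⟨fun _ _ h => reachable_bot.mp (ConnectedComponent.exact h),
    fun c => c.exists_rep⟩).symm

lemma tauMax_bot [Finite W] [Nonempty W] : (⊥ : SimpleGraph W).tauMax = 1 := by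
  refine le_antisymm (csSup_le (Set.range_nonempty _) ?_) (one_le_tauMax ⊥)
  rintro _ ⟨c, rfl⟩
  refine Finite.card_le_one_iff_subsingleton.mpr ⟨fun a b => Subtype.ext ?_⟩
  exact reachable_bot.mp (ConnectedComponent.exact (a.2.trans b.2.symm))

lemma tenacity_eq_of_forall_le {V : Type*} [Fintype V] (G : SimpleGraph V) (r : ℝ)
    (X₀ : Finset V) (hX₀ : G.IsVertexCut X₀)
    (hr : ((X₀.card : ℝ) + (G.delVerts X₀).tauMax) / (G.delVerts X₀).omegaComp = r)
    (hle : ∀ X, G.IsVertexCut X →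
      r ≤ ((X.card : ℝ) + (G.delVerts X).tauMax) / (G.delVerts X).omegaComp) :
    G.tenacity = r :=
  IsLeast.csInf_eq ⟨⟨X₀, hX₀, hr.symm⟩, by rintro _ ⟨X, hX, rfl⟩; exact hle X hX⟩

end SimpleGraph

def extremalGraph (n k t : ℕ) : SimpleGraph (Fin n) :=
  fromRel fun u v => (u : ℕ) < k ∧ ((v : ℕ) < k + t ∨ 0 < (u : ℕ))

def extremalClique (n k : ℕ) : Finset (Fin n) := {i | (i : ℕ) < k}

section extremalGraph

variable {n k t : ℕ}

instance : DecidableRel (extremalGraph n k t).Adj :=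
  inferInstanceAs (DecidableRel (fromRel _).Adj)

lemma extremalGraph_adj {u v : Fin n} : (extremalGraph n k t).Adj u v ↔ (u : ℕ) ≠ v ∧
    ((u : ℕ) < k ∧ ((v : ℕ) < k + t ∨ 0 < (u : ℕ)) ∨
      (v : ℕ) < k ∧ ((u : ℕ) < k + t ∨ 0 < (v : ℕ))) := by
  rw [extremalGraph, fromRel_adj, Ne, Fin.ext_iff]

lemma mem_extremalClique {v : Fin n} : v ∈ extremalClique n k ↔ (v : ℕ) < k := by
  simp [extremalClique]

lemma card_extremalClique (hkn : k ≤ n) : (extremalClique n k).card = k := by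
  rw [extremalClique, Fin.card_filter_val_lt, min_eq_right hkn]

lemma extremalGraph_degree (hk : 1 ≤ k) (hkt : k + t ≤ n) (v : Fin n) :
    (extremalGraph n k t).degree v =
      if (v : ℕ) = 0 then k + t - 1 else if (v : ℕ) < k then n - 1
      else if (v : ℕ) < k + t then k else k - 1 := by
  rw [← card_neighborFinset_eq_degree, neighborFinset_eq_filter]
  simp_rw [extremalGraph_adj]
  rw [Fin.card_filter_val (fun j => (v : ℕ) ≠ j ∧
    ((v : ℕ) < k ∧ (j < k + t ∨ 0 < (v : ℕ)) ∨ j < k ∧ ((v : ℕ) < k + t ∨ 0 < j)))]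
  have hv := v.isLt
  split_ifs with h₀ hK hS
  · rw [show {j ∈ range n | _} = Ico 1 (k + t) by
      ext; simp only [mem_filter, mem_range, mem_Ico]; omega, Nat.card_Ico]
  · rw [show {j ∈ range n | _} = (range n).erase v by
      ext; simp only [mem_filter, mem_range, mem_erase]; omega,
      card_erase_of_mem (mem_range.mpr hv), card_range]
  · rw [show {j ∈ range n | _} = range k by
      ext; simp only [mem_filter, mem_range]; omega, card_range]
  · rw [show {j ∈ range n | _} = Ico 1 k by
      ext; simp only [mem_filter, mem_range, mem_Ico]; omega, Nat.card_Ico]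

lemma extremalGraph_card_edgeSet (hk : 1 ≤ k) (hkt : k + t ≤ n) :
    Nat.card (extremalGraph n k t).edgeSet = k.choose 2 + (n - k) * (k - 1) + t := by
  have hsum : ∑ v, (extremalGraph n k t).degree v =
      (k + t - 1) + (k - 1) * (n - 1) + t * k + (n - (k + t)) * (k - 1) := by
    simp_rw [extremalGraph_degree hk hkt]
    rw [Fin.sum_univ_eq_sum_range (fun i => if i = 0 then k + t - 1 else if i < k then n - 1
      else if i < k + t then k else k - 1), range_eq_Ico,
      ← sum_Ico_consecutive _ (Nat.zero_le _) hkt,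
      ← sum_Ico_consecutive _ (Nat.zero_le _) (Nat.le_add_right k t),
      ← sum_Ico_consecutive _ (Nat.zero_le _) hk,
      sum_const_nat (m := k + t - 1), sum_const_nat (m := n - 1), sum_const_nat (m := k),
      sum_const_nat (m := k - 1)]
    · simp only [Nat.card_Ico, Nat.sub_zero, Nat.add_sub_cancel_left, one_mul]
    all_goals intro i hi; simp only [mem_Ico] at hi; split_ifs <;> omega
  obtain ⟨j, rfl⟩ : ∃ j, k = j + 1 := ⟨k - 1, by omega⟩
  obtain ⟨s, rfl⟩ : ∃ s, n = j + 1 + t + s := ⟨n - (j + 1 + t), by omega⟩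
  have hchoose : (j + 1) * j = (j + 1).choose 2 * 2 := by
    simpa using Nat.add_one_mul_choose_eq j 1
  have hedges := (extremalGraph (j + 1 + t + s) (j + 1) t).sum_degrees_eq_twice_card_edges
  rw [Nat.card_eq_fintype_card, ← edgeFinset_card]
  simp only [Nat.add_sub_cancel, Nat.add_sub_cancel_left,
    show j + 1 + t + s - (j + 1) = t + s by omega, show j + 1 + t - 1 = j + t by omega,
    show j + 1 + t + s - 1 = j + t + s by omega] at hsum ⊢
  linarith

lemma extremalGraph_adj_of_pos_of_lt {u v : Fin n} (hu₀ : 0 < (u : ℕ)) (huk : (u : ℕ) < k)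
    (huv : v ≠ u) : (extremalGraph n k t).Adj u v := by
  rw [extremalGraph_adj]
  have := Fin.val_ne_of_ne huv
  omega

lemma extremalGraph_connected (hk : 1 ≤ k) (hkt : k + t ≤ n) (h : 2 ≤ k ∨ k + t = n) :
    (extremalGraph n k t).Connected := by
  rcases h with h | h
  · exact connected_of_forall_adj _ ⟨1, by omega⟩ fun v hv =>
      extremalGraph_adj_of_pos_of_lt Nat.one_pos h hv
  · refine connected_of_forall_adj _ ⟨0, by omega⟩ fun v hv => ?_
    have := Fin.val_ne_of_ne hv
    rw [extremalGraph_adj]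
    dsimp only at this ⊢
    omega

lemma isClique_extremalClique :
    (extremalGraph n k t).IsClique (extremalClique n k : Set (Fin n)) := by
  intro u hu v hv huv
  rw [mem_coe, mem_extremalClique] at hu hv
  rw [extremalGraph_adj]
  have := Fin.val_ne_of_ne huv
  omega

lemma isIndepSet_compl_extremalClique :
    (extremalGraph n k t).IsIndepSet (↑(extremalClique n k)ᶜ : Set (Fin n)) := by
  intro u hu v hv _
  rw [coe_compl, Set.mem_compl_iff, mem_coe, mem_extremalClique] at hu hv
  rw [extremalGraph_adj]
  omega

lemma exists_adj_extremalClique (hk : 1 ≤ k) (h : 2 ≤ k ∨ k + t = n) {v : Fin n}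
    (hv : v ∉ extremalClique n k) :
    ∃ w ∈ extremalClique n k, (extremalGraph n k t).Adj v w := by
  rw [mem_extremalClique] at hv
  by_cases hvt : (v : ℕ) < k + t
  · exact ⟨⟨0, by omega⟩, mem_extremalClique.mpr hk,
      extremalGraph_adj.mpr (by dsimp only; omega)⟩
  · exact ⟨⟨1, by omega⟩, mem_extremalClique.mpr (by dsimp only; omega),
      extremalGraph_adj.mpr (by dsimp only; omega)⟩

lemma delVerts_extremalClique : (extremalGraph n k t).delVerts (extremalClique n k) = ⊥ := by
  ext ⟨u, hu⟩ ⟨v, hv⟩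
  rw [mem_extremalClique] at hu hv
  simp only [delVerts, comap_adj, extremalGraph_adj, bot_adj, iff_false]
  omega

lemma isVertexCut_extremalClique (hn : k + 2 ≤ n) :
    (extremalGraph n k t).IsVertexCut (extremalClique n k) := by
  rw [IsVertexCut, delVerts_extremalClique, omegaComp_bot, Finset.natCard_subtype_notMem,
    Fintype.card_fin, card_extremalClique (by omega)]
  omega

lemma mem_of_isVertexCut_extremalGraph {X : Finset (Fin n)}
    (hX : (extremalGraph n k t).IsVertexCut X) {u : Fin n} (hu₀ : 0 < (u : ℕ))
    (huk : (u : ℕ) < k) : u ∈ X := by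
  by_contra huX
  have hconn : ((extremalGraph n k t).delVerts X).Connected :=
    connected_of_forall_adj _ ⟨u, huX⟩ fun v hv =>
      extremalGraph_adj_of_pos_of_lt hu₀ huk fun h => hv (Subtype.ext h)
  have := hconn.omegaComp_eq_one
  rw [IsVertexCut] at hX
  omega

lemma extremalGraph_cut_bounds_of_zero_notMem (hk : 1 ≤ k) (ht : 1 ≤ t) (hkt : k + t ≤ n)
    {X : Finset (Fin n)} (hX : (extremalGraph n k t).IsVertexCut X)
    (h₀ : ⟨0, by omega⟩ ∉ X) :
    k + 1 ≤ X.card + ((extremalGraph n k t).delVerts X).tauMax ∧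
      ((extremalGraph n k t).delVerts X).omegaComp ≤ n - k := by
  set H := (extremalGraph n k t).delVerts X
  let z : {v // v ∉ X} := ⟨⟨0, by omega⟩, h₀⟩
  let I : Set {v // v ∉ X} := {v | k + t ≤ (v : ℕ)}
  have hreach : ∀ v ∉ I, H.Reachable v z := by
    intro v hv
    by_cases hv₀ : (v : ℕ) = 0
    · rw [show v = z from Subtype.ext (Fin.ext hv₀)]
    · refine Adj.reachable (extremalGraph_adj.mpr ?_)
      have : ¬ (0 < (v : ℕ) ∧ (v : ℕ) < k) := fun h =>
        v.2 (mem_of_isVertexCut_extremalGraph hX h.1 h.2)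
      have hv : ¬ k + t ≤ (v : ℕ) := hv
      dsimp only [z]
      omega
  have hω := H.omegaComp_le_card_add_one I z hreach
  have hτ := H.card_le_tauMax Iᶜ z fun v hv => hreach v hv
  have hsplit : Nat.card I + Nat.card ↥Iᶜ = n - X.card := by
    rw [Nat.card_coe_set_eq, Nat.card_coe_set_eq, Set.ncard_add_ncard_compl,
      Finset.natCard_subtype_notMem, Fintype.card_fin]
  have hI : Nat.card I ≤ n - (k + t) := by
    have := Nat.card_le_card_of_injective
      (fun v : I => (⟨v.1.1, v.2⟩ : {v : Fin n // k + t ≤ (v : ℕ)}))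
      fun a b h => Subtype.ext (Subtype.ext (Subtype.mk_eq_mk.mp h))
    rwa [Nat.card_eq_fintype_card (α := {v : Fin n // k + t ≤ (v : ℕ)}), Fintype.card_subtype,
      Fin.card_filter_val, show {j ∈ range n | k + t ≤ j} = Ico (k + t) n by
        ext; simp only [mem_filter, mem_range, mem_Ico]; omega, Nat.card_Ico] at this
  omega

lemma extremalGraph_cut_bounds (hk : 1 ≤ k) (ht : 1 ≤ t) (hkt : k + t ≤ n)
    {X : Finset (Fin n)} (hX : (extremalGraph n k t).IsVertexCut X) :
    k + 1 ≤ X.card + ((extremalGraph n k t).delVerts X).tauMax ∧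
      ((extremalGraph n k t).delVerts X).omegaComp ≤ n - k := by
  by_cases h₀ : (⟨0, by omega⟩ : Fin n) ∈ X
  · have hKX : extremalClique n k ⊆ X := fun u hu => by
      rw [mem_extremalClique] at hu
      rcases Nat.eq_zero_or_pos u with hu₀ | hu₀
      · rwa [show u = ⟨0, by omega⟩ from Fin.ext hu₀]
      · exact mem_of_isVertexCut_extremalGraph hX hu₀ hu
    have hkX := card_extremalClique (by omega : k ≤ n) ▸ card_le_card hKX
    have hcut : 1 < ((extremalGraph n k t).delVerts X).omegaComp := hX
    have hω := ((extremalGraph n k t).delVerts X).omegaComp_le_card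
    rw [Finset.natCard_subtype_notMem, Fintype.card_fin] at hω
    have : Nonempty {v // v ∉ X} := (Nat.card_pos_iff.mp (by
      rw [Finset.natCard_subtype_notMem, Fintype.card_fin]; omega)).1
    have := ((extremalGraph n k t).delVerts X).one_le_tauMax
    omega
  · exact extremalGraph_cut_bounds_of_zero_notMem hk ht hkt hX h₀

lemma extremalGraph_tenacity (hk : 1 ≤ k) (ht : 1 ≤ t) (hkt : k + t ≤ n) (hn : k + 2 ≤ n) :
    (extremalGraph n k t).tenacity = ((k : ℝ) + 1) / ((n : ℝ) - k) := by
  refine tenacity_eq_of_forall_le _ _ (extremalClique n k) (isVertexCut_extremalClique hn) ?_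
    fun X hX => ?_
  · have hne : Nonempty {v // v ∉ extremalClique n k} :=
      ⟨⟨⟨k, by omega⟩, by simp [mem_extremalClique]⟩⟩
    rw [delVerts_extremalClique, omegaComp_bot, tauMax_bot, Finset.natCard_subtype_notMem,
      Fintype.card_fin, card_extremalClique (by omega), Nat.cast_sub (by omega), Nat.cast_one]
  · obtain ⟨hnum, hden⟩ := extremalGraph_cut_bounds hk ht hkt hX
    have hcut : 1 < ((extremalGraph n k t).delVerts X).omegaComp := hX
    apply div_le_div₀ (by positivity) (by exact_mod_cast hnum) (by norm_cast; omega)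
    rw [← Nat.cast_sub (by omega)]
    exact_mod_cast hden

end extremalGraph

lemma exists_edge_surplus {n m k : ℕ} (h1 : n - 1 ≤ m) (h2 : m ≤ n.choose 2 - 1)
    (hk1 : k.choose 2 + (n - k) * (k - 1) < m) (hk2 : m ≤ k.choose 2 + (n - k) * k) :
    ∃ t, 1 ≤ k ∧ 1 ≤ t ∧ k + t ≤ n ∧ k + 2 ≤ n ∧ (2 ≤ k ∨ k + t = n) ∧
      m = k.choose 2 + (n - k) * (k - 1) + t := by
  have hk : 1 ≤ k := by
    by_contra hk
    obtain rfl : k = 0 := by omega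
    rw [Nat.choose_zero_succ] at hk1 hk2
    omega
  have hkn : k < n := by
    by_contra hkn
    rw [Nat.sub_eq_zero_of_le (by omega)] at hk1 hk2
    omega
  obtain ⟨t, rfl⟩ : ∃ t, m = k.choose 2 + (n - k) * (k - 1) + t :=
    ⟨m - (k.choose 2 + (n - k) * (k - 1)), by omega⟩
  have hsucc : (n - k) * k = (n - k) * (k - 1) + (n - k) := by
    rw [← Nat.mul_add_one, Nat.sub_add_cancel hk]
  refine ⟨t, hk, by omega, by omega, ?_, ?_, rfl⟩
  · by_contra hn
    obtain rfl : n = k + 1 := by omega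
    have hchoose : (k + 1).choose 2 = k.choose 1 + k.choose 2 := Nat.choose_succ_succ' k 1
    rw [hchoose, Nat.choose_one_right, Nat.add_sub_cancel_left, one_mul] at h2
    omega
  · by_contra h
    obtain rfl : k = 1 := by omega
    have : Nat.choose 1 2 = 0 := rfl
    omega

theorem exists_min_tenacity_graph (n m k : ℕ) (h1 : n - 1 ≤ m)
    (h2 : m ≤ n.choose 2 - 1)
    (hk1 : k.choose 2 + (n - k) * (k - 1) < m)
    (hk2 : m ≤ k.choose 2 + (n - k) * k) :
    ∃ G : SimpleGraph (Fin n), G.Connected ∧ Nat.card G.edgeSet = m ∧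
      (∃ K : Finset (Fin n), K.card = k ∧
        (∀ u ∈ K, ∀ v ∈ K, u ≠ v → G.Adj u v) ∧
        (∀ u ∉ K, ∀ v ∉ K, ¬ G.Adj u v) ∧
        (∀ v ∉ K, ∃ w ∈ K, G.Adj v w)) ∧
      G.tenacity = ((k : ℝ) + 1) / ((n : ℝ) - (k : ℝ)) := by
  obtain ⟨t, hk, ht, hkt, hn, hconn, rfl⟩ := exists_edge_surplus h1 h2 hk1 hk2
  refine ⟨extremalGraph n k t, extremalGraph_connected hk hkt hconn,
    extremalGraph_card_edgeSet hk hkt,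
    ⟨extremalClique n k, card_extremalClique (by omega), ?_, ?_, ?_⟩,
    extremalGraph_tenacity hk ht hkt hn⟩
  · exact fun u hu v hv => isClique_extremalClique (mem_coe.mpr hu) (mem_coe.mpr hv)
  · exact fun u hu v hv huv => isIndepSet_compl_extremalClique (by simpa using hu)
      (by simpa using hv) huv.ne huv
  · exact fun v hv => exists_adj_extremalClique hk hconn hv
end
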